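/- arXiv:2210.06347 — 4 statements merged into one kernel-verified Lean document; each statement's English description precedes it below -/
import Mathlib

section
/- For F the sign function (F(x) = 1 for x > 0, F(x) = -1 for x < 0, F(0) = 0), any m ≥ 2, any k ∈ {1,...,m}, and any nonzero vector c ∈ ℝ^m, the Gaussian integral (2π)^{-m/2} ∫_{ℝ^m} F(⟨c,x⟩) x_k e^{-|x|²/2} dx equals √(2/π) · c_k/|c|. -/
/-!
In coordinates with respect to an orthonormal basis whose first vector is `c / ‖c‖`, Lebesgue
measure and the weight `exp (-‖x‖² / 2)` split into one-dimensional factors, while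
`⟪v, x⟫ = ∑ ⟪v, bᵢ⟫ xᵢ`. By Fubini the integral of `sign x₀ · xᵢ · exp (-‖x‖² / 2)` is a product of
one-dimensional Gaussian moments: it vanishes for `i ≠ 0` because `∫ t e^{-t²/2} dt = 0`, and for
`i = 0` it is `∫ |t| e^{-t²/2} dt · √(2π)^{m-1} = 2 √(2π)^{m-1}`. Hence
`∫ sign ⟪c, x⟫ ⟪v, x⟫ e^{-‖x‖²/2} dx = 2 √(2π)^{m-1} ⟪c, v⟫ / ‖c‖`; take `v = e_k`.
-/

open MeasureTheory Real Finset
open scoped RealInnerProductSpace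

theorem coe_sign_eq_ite (t : ℝ) :
    (SignType.sign t : ℝ) = if 0 < t then 1 else if t < 0 then -1 else 0 := by
  rw [sign_apply]
  split_ifs <;> simp

theorem measurable_coe_sign : Measurable (fun t : ℝ => (SignType.sign t : ℝ)) := by
  simp only [coe_sign_eq_ite]
  exact Measurable.ite measurableSet_Ioi measurable_const
    (Measurable.ite measurableSet_Iio measurable_const measurable_const)

theorem abs_coe_sign_le_one (t : ℝ) : |(SignType.sign t : ℝ)| ≤ 1 := by
  rcases SignType.trichotomy (SignType.sign t) with h | h | h <;> simp [h]

theorem integrable_exp_neg_sq_div_two : Integrable (fun t : ℝ => exp (-t ^ 2 / 2)) := by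
  simpa only [neg_mul, one_div, ← div_eq_inv_mul, neg_div] using
    integrable_exp_neg_mul_sq (b := 1 / 2) (by norm_num)

theorem integrable_mul_exp_neg_sq_div_two : Integrable (fun t : ℝ => t * exp (-t ^ 2 / 2)) := by
  simpa only [neg_mul, one_div, ← div_eq_inv_mul, neg_div] using
    integrable_mul_exp_neg_mul_sq (b := 1 / 2) (by norm_num)

theorem integral_exp_neg_sq_div_two : ∫ t : ℝ, exp (-t ^ 2 / 2) = √(2 * π) := by
  simpa only [neg_mul, one_div, ← div_eq_inv_mul, neg_div, div_inv_eq_mul, mul_comm π]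
    using integral_gaussian (1 / 2)

theorem integral_mul_exp_neg_sq_div_two : ∫ t : ℝ, t * exp (-t ^ 2 / 2) = 0 := by
  have h := integral_neg_eq_self (fun t : ℝ => t * exp (-t ^ 2 / 2)) volume
  simp only [neg_mul, neg_sq, integral_neg] at h
  linarith

theorem integral_Ioi_mul_exp_neg_sq_div_two :
    ∫ t in Set.Ioi (0 : ℝ), t * exp (-t ^ 2 / 2) = 1 := by
  have h := integral_mul_cexp_neg_mul_sq (b := 1 / 2) (by norm_num)
  have hcast (r : ℝ) :
      (r : ℂ) * Complex.exp (-(1 / 2) * r ^ 2) = ((r * exp (-r ^ 2 / 2) : ℝ) : ℂ) := by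
    push_cast
    ring_nf
  norm_num only [hcast, integral_complex_ofReal] at h
  exact_mod_cast h

theorem integral_abs_mul_exp_neg_sq_div_two : ∫ t : ℝ, |t| * exp (-t ^ 2 / 2) = 2 := by
  have h := integral_comp_abs (f := fun t : ℝ => t * exp (-t ^ 2 / 2))
  simp only [sq_abs] at h
  rw [h, integral_Ioi_mul_exp_neg_sq_div_two, mul_one]

section Coordinates

variable {ι : Type*} [DecidableEq ι]

/-- The factor in the coordinate `j` of `z ↦ sign (z i₀) * z i * ∏ j, exp (-z j ^ 2 / 2)`. -/
noncomputable def signMomentFactor (i₀ i j : ι) (t : ℝ) : ℝ :=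
  (if j = i₀ then (SignType.sign t : ℝ) else 1) * ((if j = i then t else 1) * exp (-t ^ 2 / 2))

theorem integrable_signMomentFactor (i₀ i j : ι) : Integrable (signMomentFactor i₀ i j) := by
  refine Integrable.bdd_mul (c := 1) ?_ ?_ (Filter.Eventually.of_forall fun t => ?_)
  · split_ifs
    · exact integrable_mul_exp_neg_sq_div_two
    · simpa using integrable_exp_neg_sq_div_two
  · split_ifs
    · exact measurable_coe_sign.aestronglyMeasurable
    · exact aestronglyMeasurable_const
  · split_ifs
    · exact abs_coe_sign_le_one t
    · simp

variable [Fintype ι]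

theorem prod_signMomentFactor (i₀ i : ι) (z : ι → ℝ) :
    ∏ j, signMomentFactor i₀ i j (z j) =
      SignType.sign (z i₀) * z i * ∏ j, exp (-z j ^ 2 / 2) := by
  simp only [signMomentFactor, prod_mul_distrib, Fintype.prod_ite_eq', mul_assoc]

theorem integrable_sign_mul_mul_prod_exp (i₀ i : ι) :
    Integrable (fun z : ι → ℝ => SignType.sign (z i₀) * z i * ∏ j, exp (-z j ^ 2 / 2)) := by
  simp only [← prod_signMomentFactor]
  exact Integrable.fintype_prod (integrable_signMomentFactor i₀ i)

theorem integral_sign_mul_mul_prod_exp (i₀ i : ι) :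
    ∫ z : ι → ℝ, SignType.sign (z i₀) * z i * ∏ j, exp (-z j ^ 2 / 2) =
      if i = i₀ then 2 * √(2 * π) ^ (Fintype.card ι - 1) else 0 := by
  simp only [← prod_signMomentFactor, integral_fintype_prod_volume_eq_prod]
  split_ifs with hi
  · subst hi
    have h_self : ∫ t, signMomentFactor i i i t = 2 := by
      simpa [signMomentFactor, ← mul_assoc, sign_mul_self] using
        integral_abs_mul_exp_neg_sq_div_two
    have h_other (j : ι) (hj : j ∈ ({i} : Finset ι)ᶜ) :
        ∫ t, signMomentFactor i i j t = √(2 * π) := by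
      simpa [signMomentFactor, show j ≠ i by simpa using hj] using integral_exp_neg_sq_div_two
    rw [Fintype.prod_eq_mul_prod_compl i, h_self, prod_congr rfl h_other, prod_const, card_compl,
      card_singleton]
  · refine prod_eq_zero (mem_univ i) ?_
    simpa [signMomentFactor, hi] using integral_mul_exp_neg_sq_div_two

theorem integral_sign_mul_sum_mul_prod_exp (i₀ : ι) (a : ι → ℝ) :
    ∫ z : ι → ℝ, SignType.sign (z i₀) * (∑ i, a i * z i) * ∏ j, exp (-z j ^ 2 / 2) =
      2 * √(2 * π) ^ (Fintype.card ι - 1) * a i₀ := by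
  have h (z : ι → ℝ) : SignType.sign (z i₀) * (∑ i, a i * z i) * ∏ j, exp (-z j ^ 2 / 2) =
      ∑ i, a i * (SignType.sign (z i₀) * z i * ∏ j, exp (-z j ^ 2 / 2)) := by
    rw [mul_sum, sum_mul]
    exact sum_congr rfl fun i _ => by ring
  simp only [h]
  rw [integral_finsetSum _ fun i _ => (integrable_sign_mul_mul_prod_exp i₀ i).const_mul (a i)]
  simp only [integral_const_mul, integral_sign_mul_mul_prod_exp, mul_ite, mul_zero,
    Fintype.sum_ite_eq']
  ring

end Coordinates

section InnerProductSpace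

variable {E : Type*} [NormedAddCommGroup E] [InnerProductSpace ℝ E] [FiniteDimensional ℝ E]
  [MeasurableSpace E] [BorelSpace E]

theorem OrthonormalBasis.integral_sign_inner_mul_inner_mul_exp {ι : Type*} [Fintype ι]
    (b : OrthonormalBasis ι ℝ E) (i₀ : ι) (v : E) :
    ∫ x : E, SignType.sign ⟪b i₀, x⟫ * ⟪v, x⟫ * exp (-‖x‖ ^ 2 / 2) =
      2 * √(2 * π) ^ (Fintype.card ι - 1) * ⟪v, b i₀⟫ := by
  classical
  let e : E ≃ᵐ (ι → ℝ) := b.measurableEquiv.trans (MeasurableEquiv.toLp 2 (ι → ℝ)).symm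
  have he : MeasurePreserving e :=
    (EuclideanSpace.volume_preserving_symm_measurableEquiv_toLp ι).comp
      b.measurePreserving_measurableEquiv
  have he_apply (x : E) (i : ι) : e x i = ⟪b i, x⟫ := b.repr_apply_apply x i
  rw [← integral_sign_mul_sum_mul_prod_exp i₀ (fun i => ⟪v, b i⟫), ← he.integral_comp']
  refine integral_congr_ae (Filter.Eventually.of_forall fun x => ?_)
  simp only [he_apply, b.sum_inner_mul_inner, ← exp_sum, ← sum_div, sum_neg_distrib,
    b.sum_sq_inner_right]

theorem integral_sign_inner_mul_inner_mul_exp_of_norm_eq_one {u : E} (hu : ‖u‖ = 1) (v : E) :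
    ∫ x : E, SignType.sign ⟪u, x⟫ * ⟪v, x⟫ * exp (-‖x‖ ^ 2 / 2) =
      2 * √(2 * π) ^ (Module.finrank ℝ E - 1) * ⟪u, v⟫ := by
  have hu' : Orthonormal ℝ (Subtype.val : ({u} : Set E) → E) := by simpa using hu
  obtain ⟨s, b, hus, hb⟩ := hu'.exists_orthonormalBasis_extension
  have hb_u : b ⟨u, hus rfl⟩ = u := by simp [hb]
  rw [← hb_u, b.integral_sign_inner_mul_inner_mul_exp, Module.finrank_eq_card_basis b.toBasis,
    real_inner_comm]

theorem integral_sign_inner_mul_inner_mul_exp (c v : E) :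
    ∫ x : E, SignType.sign ⟪c, x⟫ * ⟪v, x⟫ * exp (-‖x‖ ^ 2 / 2) =
      2 * √(2 * π) ^ (Module.finrank ℝ E - 1) * (⟪c, v⟫ / ‖c‖) := by
  rcases eq_or_ne c 0 with rfl | hc
  · simp
  have hc_pos : 0 < ‖c‖ := norm_pos_iff.2 hc
  have hsign (x : E) : SignType.sign ⟪c, x⟫ = SignType.sign ⟪‖c‖⁻¹ • c, x⟫ := by
    rw [real_inner_smul_left, sign_mul, sign_pos (inv_pos.2 hc_pos), one_mul]
  simp only [hsign]
  rw [integral_sign_inner_mul_inner_mul_exp_of_norm_eq_one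
      (by rw [norm_smul, norm_inv, norm_norm, inv_mul_cancel₀ hc_pos.ne']),
    real_inner_smul_left, inv_mul_eq_div]

end InnerProductSpace

theorem rpow_neg_half_mul_sqrt_pow (n : ℕ) (hn : 1 ≤ n) :
    (2 * π) ^ (-(n : ℝ) / 2) * (2 * √(2 * π) ^ (n - 1)) = √(2 / π) := by
  have hrpow : (2 * π) ^ (-(n : ℝ) / 2) = (√(2 * π) ^ n)⁻¹ := by
    rw [sqrt_eq_rpow, ← rpow_natCast, ← rpow_mul (by positivity), neg_div,
      rpow_neg (by positivity)]
    ring_nf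
  obtain ⟨p, rfl⟩ := Nat.exists_eq_add_of_le' hn
  rw [hrpow, Nat.add_sub_cancel, pow_succ, sqrt_div' _ pi_pos.le, sqrt_mul' _ pi_pos.le]
  field_simp
  rw [sq_sqrt zero_le_two]

theorem stmt_0_general (m : ℕ) (k : Fin m)
    (c : EuclideanSpace ℝ (Fin m)) :
    (2 * π) ^ (-(m : ℝ) / 2) *
      ∫ x : EuclideanSpace ℝ (Fin m),
        (if 0 < ⟪c, x⟫ then (1 : ℝ) else if ⟪c, x⟫ < 0 then -1 else 0) *
          x k * Real.exp (-‖x‖ ^ 2 / 2)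
    = Real.sqrt (2 / π) * (c k / ‖c‖) := by
  have hx_k (x : EuclideanSpace ℝ (Fin m)) : x k = ⟪EuclideanSpace.single k 1, x⟫ := by
    simp [EuclideanSpace.inner_single_left]
  simp only [← coe_sign_eq_ite, hx_k]
  rw [integral_sign_inner_mul_inner_mul_exp, finrank_euclideanSpace_fin, ← mul_assoc,
    rpow_neg_half_mul_sqrt_pow m k.pos, real_inner_comm]

/-- Gaussian integral of sign(⟨c,x⟩)·x_k equals √(2/π)·c_k/|c|. -/
theorem stmt_0 (m : ℕ) (hm : 2 ≤ m) (k : Fin m)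
    (c : EuclideanSpace ℝ (Fin m)) (hc : c ≠ 0) :
    (2 * π) ^ (-(m : ℝ) / 2) *
      ∫ x : EuclideanSpace ℝ (Fin m),
        (if 0 < ⟪c, x⟫ then (1 : ℝ) else if ⟪c, x⟫ < 0 then -1 else 0) *
          x k * Real.exp (-‖x‖ ^ 2 / 2)
    = Real.sqrt (2 / π) * (c k / ‖c‖) :=
  stmt_0_general m k c
end

section
/- Let m ≥ 2 and suppose there is c₀ > 0 with λ_k ≥ c₀ k² for all k ≥ 1, where (λ_k) are positive reals. Then for every t > 0, the quantity |c(t)| := (∑_{k=1}^m (1 - e^{-2λ_k t})/(2λ_k))^{1/2} satisfies |c(t)| ≤ (2πt/c₀)^{1/4}. -/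
open MeasureTheory Real

/-!
Each summand is at most `min t (1 / (2 λ_k)) ≤ min t (a / k²)` with `a = 1 / (2 c₀)`.
Bounding the first `K` summands by `t` and the tail by `a ∑_{k > K} k⁻² ≤ 2a / (K + 1)`, the choice
`K = ⌊√(a / t)⌋` gives `∑ ≤ 3 √(a t)`, and `9 a t ≤ 2π t / c₀` since `9 / 4 ≤ π`.
-/

lemma one_sub_exp_neg_div_le {l t : ℝ} (hl : 0 < l) :
    (1 - exp (-2 * l * t)) / (2 * l) ≤ t := by
  rw [div_le_iff₀ (by positivity)]
  nlinarith [add_one_le_exp (-2 * l * t)]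

lemma one_sub_exp_neg_div_le_one_div {l : ℝ} (t : ℝ) (hl : 0 < l) :
    (1 - exp (-2 * l * t)) / (2 * l) ≤ 1 / (2 * l) := by
  gcongr
  linarith [exp_pos (-2 * l * t)]

lemma sum_Icc_le_mul_add_div {f : ℕ → ℝ} {a t : ℝ} (ha : 0 ≤ a) (ht : 0 ≤ t)
    (hft : ∀ k, 1 ≤ k → f k ≤ t) (hfa : ∀ k, 1 ≤ k → f k ≤ a / (k : ℝ) ^ 2) (K m : ℕ) :
    ∑ k ∈ Finset.Icc 1 m, f k ≤ K * t + 2 * a / (K + 1) := by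
  rw [← Finset.sum_filter_add_sum_filter_not (Finset.Icc 1 m) (· ≤ K)]
  have hhead : Finset.filter (· ≤ K) (Finset.Icc 1 m) ⊆ Finset.Icc 1 K := by
    intro k
    simp only [Finset.mem_filter, Finset.mem_Icc]
    omega
  have htail : Finset.filter (¬ · ≤ K) (Finset.Icc 1 m) = Finset.Ioo K (m + 1) := by
    ext k
    simp only [Finset.mem_filter, Finset.mem_Icc, Finset.mem_Ioo]
    omega
  gcongr
  · calc ∑ k ∈ Finset.filter (· ≤ K) (Finset.Icc 1 m), f k
        ≤ (Finset.filter (· ≤ K) (Finset.Icc 1 m)).card * t := by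
          simpa using Finset.sum_le_card_nsmul _ _ t fun k hk =>
            hft k (Finset.mem_Icc.mp (hhead hk)).1
      _ ≤ K * t := by
          gcongr
          simpa using Finset.card_le_card hhead
  · rw [htail]
    calc ∑ k ∈ Finset.Ioo K (m + 1), f k
        ≤ ∑ k ∈ Finset.Ioo K (m + 1), a * ((k : ℝ) ^ 2)⁻¹ :=
          Finset.sum_le_sum fun k hk => by
            simpa [div_eq_mul_inv] using hfa k (by linarith [(Finset.mem_Ioo.mp hk).1])
      _ ≤ a * (2 / (K + 1)) := by
          rw [← Finset.mul_sum]
          gcongr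
          exact sum_Ioo_inv_sq_le K (m + 1)
      _ = 2 * a / (K + 1) := by ring

lemma sum_Icc_le_three_mul_sqrt {f : ℕ → ℝ} {a t : ℝ} (ha : 0 ≤ a) (ht : 0 < t)
    (hft : ∀ k, 1 ≤ k → f k ≤ t) (hfa : ∀ k, 1 ≤ k → f k ≤ a / (k : ℝ) ^ 2) (m : ℕ) :
    ∑ k ∈ Finset.Icc 1 m, f k ≤ 3 * √(a * t) := by
  set s := √(a / t)
  have hs : 0 ≤ s := sqrt_nonneg _
  have ha_eq : a = s ^ 2 * t := by
    rw [sq_sqrt (by positivity)]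
    field_simp
  have hsqrt : √(a * t) = s * t := by
    rw [ha_eq, show s ^ 2 * t * t = (s * t) ^ 2 by ring, sqrt_sq (by positivity)]
  set K := ⌊s⌋₊
  have hK : (K : ℝ) ≤ s := Nat.floor_le hs
  have hK1 : s < K + 1 := Nat.lt_floor_add_one s
  have htail : 2 * a / (K + 1) ≤ 2 * (s * t) := by
    rw [div_le_iff₀ (by positivity), ha_eq]
    nlinarith [mul_nonneg hs ht.le]
  calc ∑ k ∈ Finset.Icc 1 m, f k ≤ K * t + 2 * a / (K + 1) :=
        sum_Icc_le_mul_add_div ha ht.le hft hfa K m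
    _ ≤ s * t + 2 * (s * t) := by gcongr
    _ = 3 * √(a * t) := by rw [hsqrt]; ring

theorem stmt_6_general (m : ℕ) (lam : ℕ → ℝ) (hpos : ∀ k : ℕ, 1 ≤ k → 0 < lam k)
    (c₀ : ℝ) (hc₀ : 0 < c₀) (hlow : ∀ k : ℕ, 1 ≤ k → c₀ * (k : ℝ) ^ 2 ≤ lam k)
    (t : ℝ) (ht : 0 < t) :
    Real.sqrt (∑ k ∈ Finset.Icc 1 m, (1 - Real.exp (-2 * lam k * t)) / (2 * lam k))
      ≤ (2 * π * t / c₀) ^ ((1 : ℝ) / 4) := by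
  have hfa : ∀ k, 1 ≤ k →
      (1 - exp (-2 * lam k * t)) / (2 * lam k) ≤ 1 / (2 * c₀) / (k : ℝ) ^ 2 := fun k hk =>
    (one_sub_exp_neg_div_le_one_div t (hpos k hk)).trans <| by
      rw [div_div]
      exact one_div_le_one_div_of_le (by positivity) (by linarith [hlow k hk])
  have hsum := sum_Icc_le_three_mul_sqrt (by positivity) ht
    (fun k hk => one_sub_exp_neg_div_le (hpos k hk)) hfa m
  have hconst : 3 * √(1 / (2 * c₀) * t) ≤ √(2 * π * t / c₀) := by
    rw [show (3 : ℝ) = √(3 ^ 2) by rw [sqrt_sq (by norm_num)], ← sqrt_mul (by norm_num)]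
    refine sqrt_le_sqrt ?_
    rw [show 3 ^ 2 * (1 / (2 * c₀) * t) = 9 / 4 * (2 * t / c₀) by field_simp; ring,
      show 2 * π * t / c₀ = π * (2 * t / c₀) by ring]
    gcongr
    linarith [pi_gt_three]
  calc √(∑ k ∈ Finset.Icc 1 m, (1 - exp (-2 * lam k * t)) / (2 * lam k))
      ≤ √(√(2 * π * t / c₀)) := sqrt_le_sqrt (hsum.trans hconst)
    _ = (2 * π * t / c₀) ^ ((1 : ℝ) / 4) := by
        rw [sqrt_eq_rpow, sqrt_eq_rpow, ← rpow_mul (by positivity)]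
        norm_num

theorem stmt_6 (m : ℕ) (hm : 2 ≤ m) (lam : ℕ → ℝ) (hpos : ∀ k : ℕ, 1 ≤ k → 0 < lam k)
    (c₀ : ℝ) (hc₀ : 0 < c₀) (hlow : ∀ k : ℕ, 1 ≤ k → c₀ * (k : ℝ) ^ 2 ≤ lam k)
    (t : ℝ) (ht : 0 < t) :
    Real.sqrt (∑ k ∈ Finset.Icc 1 m, (1 - Real.exp (-2 * lam k * t)) / (2 * lam k))
      ≤ (2 * π * t / c₀) ^ ((1 : ℝ) / 4) :=
  stmt_6_general m lam hpos c₀ hc₀ hlow t ht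
end

section
/- Let (λ_k) be a sequence of positive reals with λ_k ≥ c₀ k² for all k (some c₀ > 0) and λ_k ≤ C k² for all k (some C > 0). Fix δ > 0 and define for m ≥ 2, A_m = (2/π) ∑_{k=1}^m (∫_0^δ (λ_k e^{-λ_k t}/(1-e^{-2λ_k t})^{1/2}) · (c_k(t)/|c(t)|) dt)², where c_k(t) = ((1-e^{-2λ_k t})/(2λ_k))^{1/2} and |c(t)| = (∑_{j=1}^m c_j(t)²)^{1/2}. Then A_m → ∞ as m → ∞. -/
/-!
After simplification the `k`-th integrand is `√(λ_k / 2) e^{-λ_k t} / |c(t)|`. Because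
`c_j(t)² ≤ min (t, 1 / (2 c₀ j²))`, splitting the sum at `j ≈ (2 c₀ t)^{-1/2}` gives
`|c(t)|² ≤ 3 √(t / (2 c₀))` uniformly in `m`. On the window `(1 / (2 λ_k), 1 / λ_k]`, which lies in
`(0, δ]` once `k ≥ 1 / (c₀ δ)`, the integrand is therefore `≳ λ_k^{3/4}`, so the `k`-th integral is
`≳ λ_k^{-1/4}` and its square is `≳ λ_k^{-1/2} ≥ 1 / (√C k)`. The harmonic series diverges.
-/

open MeasureTheory Real Filter

open Finset

/-- `c_k(t)²` of the paper for `l = λ_k`: the variance at time `t` of an Ornstein–Uhlenbeck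
process with rate `l`. -/
noncomputable def ouVariance (l t : ℝ) : ℝ := (1 - exp (-2 * l * t)) / (2 * l)

theorem one_sub_exp_neg_two_mul_pos {l t : ℝ} (hl : 0 < l) (ht : 0 < t) :
    0 < 1 - exp (-2 * l * t) :=
  sub_pos.mpr (exp_lt_one_iff.mpr (by nlinarith))

theorem ouVariance_pos {l t : ℝ} (hl : 0 < l) (ht : 0 < t) : 0 < ouVariance l t := by
  have := one_sub_exp_neg_two_mul_pos hl ht
  unfold ouVariance
  positivity

theorem ouVariance_le_self {l t : ℝ} (hl : 0 < l) : ouVariance l t ≤ t := by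
  rw [ouVariance, div_le_iff₀ (by positivity)]
  linarith [add_one_le_exp (-2 * l * t)]

theorem ouVariance_le_inv {l t : ℝ} (hl : 0 < l) : ouVariance l t ≤ 1 / (2 * l) := by
  unfold ouVariance
  gcongr
  linarith [exp_pos (-2 * l * t)]

theorem mul_exp_le_ouVariance {l t : ℝ} (hl : 0 < l) : t * exp (-2 * l * t) ≤ ouVariance l t := by
  have hprod : exp (-2 * l * t) * exp (2 * l * t) = 1 := by rw [← exp_add]; simp
  rw [ouVariance, le_div_iff₀ (by positivity)]
  nlinarith [mul_le_mul_of_nonneg_left (add_one_le_exp (2 * l * t)) (exp_pos (-2 * l * t)).le]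

theorem ouVariance_integrand_eq {l t : ℝ} (hl : 0 < l) (ht : 0 < t) (s : ℝ) :
    l * exp (-l * t) / √(1 - exp (-2 * l * t)) * (√(ouVariance l t) / s) =
      √(l / 2) * exp (-l * t) / s := by
  have h := one_sub_exp_neg_two_mul_pos hl ht
  have hl2 : √(l / 2) = l / √(2 * l) := by
    rw [eq_div_iff (by positivity), ← sqrt_mul (by positivity),
      show l / 2 * (2 * l) = l ^ 2 by ring, sqrt_sq hl.le]
  set A := 1 - exp (-2 * l * t)
  calc l * exp (-l * t) / √A * (√(A / (2 * l)) / s)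
      = l / √(2 * l) * exp (-l * t) / s * (√A / √A) := by rw [sqrt_div h.le]; ring
    _ = √(l / 2) * exp (-l * t) / s := by rw [div_self (sqrt_pos.mpr h).ne', mul_one, hl2]

theorem sum_min_inv_sq_le {a t : ℝ} (ha : 0 ≤ a) (ht : 0 < t) (m : ℕ) :
    ∑ j ∈ Icc 1 m, min t (a / (j : ℝ) ^ 2) ≤ 3 * √a * √t := by
  set N := ⌊√a / √t⌋₊
  have hst : 0 < √t := sqrt_pos.mpr ht
  have hN : (N : ℝ) * √t ≤ √a := (le_div_iff₀ hst).mp (Nat.floor_le (by positivity))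
  have hN1 : √a ≤ (N + 1) * √t := (div_le_iff₀ hst).mp (Nat.lt_floor_add_one _).le
  have hsmall : ∑ j ∈ Icc 1 m with j ≤ N, min t (a / (j : ℝ) ^ 2) ≤ √a * √t := by
    have hcard : #{j ∈ Icc 1 m | j ≤ N} ≤ N :=
      (card_le_card fun j hj => by simp_all).trans (Nat.card_Icc 1 N).le
    calc ∑ j ∈ Icc 1 m with j ≤ N, min t (a / (j : ℝ) ^ 2)
        ≤ ∑ j ∈ Icc 1 m with j ≤ N, t := sum_le_sum fun _ _ => min_le_left _ _
      _ ≤ N * (√t * √t) := by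
        rw [sum_const, nsmul_eq_mul, mul_self_sqrt ht.le]
        gcongr
      _ ≤ √a * √t := by rw [← mul_assoc]; gcongr
  have hlarge : ∑ j ∈ Icc 1 m with ¬j ≤ N, min t (a / (j : ℝ) ^ 2) ≤ 2 * √a * √t := by
    calc ∑ j ∈ Icc 1 m with ¬j ≤ N, min t (a / (j : ℝ) ^ 2)
        ≤ ∑ j ∈ Ioo N (m + 1), a * ((j : ℝ) ^ 2)⁻¹ := by
          refine sum_le_sum_of_subset_of_nonneg (fun j hj => ?_) (fun _ _ _ => by positivity)
            |>.trans' (sum_le_sum fun _ _ => (min_le_right _ _).trans_eq (div_eq_mul_inv _ _))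
          simp only [mem_filter, mem_Icc, mem_Ioo] at hj ⊢
          omega
      _ ≤ a * (2 / (N + 1)) := by rw [← mul_sum]; gcongr; exact sum_Ioo_inv_sq_le N (m + 1)
      _ ≤ 2 * √a * √t := by
        rw [mul_div_assoc', div_le_iff₀ (by positivity)]
        nlinarith [mul_le_mul_of_nonneg_left hN1 (sqrt_nonneg a), mul_self_sqrt ha]
  rw [← sum_filter_add_sum_filter_not _ (· ≤ N)]
  linarith

theorem pos_of_mul_sq_le {lam : ℕ → ℝ} {c₀ : ℝ} (hc₀ : 0 < c₀)
    (hlow : ∀ k : ℕ, 1 ≤ k → c₀ * (k : ℝ) ^ 2 ≤ lam k) {k : ℕ} (hk : 1 ≤ k) : 0 < lam k := by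
  have : (0 : ℝ) < k := by exact_mod_cast hk
  exact lt_of_lt_of_le (by positivity) (hlow k hk)

theorem sum_ouVariance_le {lam : ℕ → ℝ} {c₀ : ℝ} (hc₀ : 0 < c₀)
    (hlow : ∀ k : ℕ, 1 ≤ k → c₀ * (k : ℝ) ^ 2 ≤ lam k) (m : ℕ) {t : ℝ} (ht : 0 < t) :
    ∑ j ∈ Icc 1 m, ouVariance (lam j) t ≤ 3 * √(1 / (2 * c₀)) * √t := by
  refine (sum_le_sum fun j hj => ?_).trans (sum_min_inv_sq_le (by positivity) ht m)
  have hj : 1 ≤ j := (mem_Icc.mp hj).1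
  have hj' : (0 : ℝ) < j := by exact_mod_cast hj
  have hl := pos_of_mul_sq_le hc₀ hlow hj
  refine le_min (ouVariance_le_self hl) ((ouVariance_le_inv hl).trans ?_)
  rw [div_div]
  exact one_div_le_one_div_of_le (by positivity) (by linarith [hlow j hj])

theorem integrand_le_inv_sqrt {l t s : ℝ} (hl : 0 < l) (ht : 0 < t) (hs : ouVariance l t ≤ s) :
    √(l / 2) * exp (-l * t) / √s ≤ √(l / 2) / √t := by
  have hts : √t * exp (-l * t) ≤ √s := by
    have h := sqrt_le_sqrt ((mul_exp_le_ouVariance hl).trans hs)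
    rwa [sqrt_mul ht.le, show -2 * l * t = (-l * t) + (-l * t) by ring, exp_add,
      sqrt_mul_self (exp_pos _).le] at h
  calc √(l / 2) * exp (-l * t) / √s
      ≤ √(l / 2) * exp (-l * t) / (√t * exp (-l * t)) := by gcongr
    _ = √(l / 2) / √t := mul_div_mul_right _ _ (exp_ne_zero _)

theorem integrand_ge_of_mem_Ioc {l K t s : ℝ} (hl : 0 < l)
    (ht : t ∈ Set.Ioc (1 / (2 * l)) (1 / l)) (hs : 0 < s) (hsK : s ≤ K * √t) :
    exp (-1) * √(l / 2) / √(K / √l) ≤ √(l / 2) * exp (-l * t) / √s := by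
  obtain ⟨ht₁, ht₂⟩ := ht
  have ht : 0 < t := lt_trans (by positivity) ht₁
  have hlt : l * t ≤ 1 := by rwa [le_div_iff₀ hl, mul_comm] at ht₂
  have hK : 0 < K := pos_of_mul_pos_left (hs.trans_le hsK) (sqrt_nonneg t)
  have hsK' : s ≤ K / √l := by
    refine hsK.trans ?_
    rw [le_div_iff₀ (sqrt_pos.mpr hl), mul_assoc, ← sqrt_mul ht.le]
    exact mul_le_of_le_one_right hK.le (sqrt_le_one.mpr (by linarith))
  calc exp (-1) * √(l / 2) / √(K / √l) = √(l / 2) * exp (-1) / √(K / √l) := by ring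
    _ ≤ √(l / 2) * exp (-l * t) / √s := by gcongr; linarith

theorem integrableOn_integrand {l δ : ℝ} {S : ℝ → ℝ} (hl : 0 < l) (hS : Measurable S)
    (hSge : ∀ t, 0 < t → ouVariance l t ≤ S t) :
    IntegrableOn (fun t => √(l / 2) * exp (-l * t) / √(S t)) (Set.Ioc 0 δ) := by
  have hdom : IntegrableOn (fun t : ℝ => √(l / 2) * t ^ (-(1 / 2) : ℝ)) (Set.Ioc 0 δ) :=
    ((intervalIntegral.intervalIntegrable_rpow' (by norm_num)).const_mul _).def'.mono_set
      Set.Ioc_subset_uIoc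
  refine hdom.mono' (Measurable.aestronglyMeasurable (by fun_prop))
    ((ae_restrict_iff' measurableSet_Ioc).mpr ?_)
  filter_upwards with t ht
  rw [norm_of_nonneg (by positivity), rpow_neg ht.1.le, ← sqrt_eq_rpow, ← div_eq_mul_inv]
  exact integrand_le_inv_sqrt hl ht.1 (hSge t ht.1)

theorem sq_integral_integrand_ge {l δ K : ℝ} {S : ℝ → ℝ} (hl : 0 < l) (hlδ : 1 ≤ l * δ)
    (hS : Measurable S) (hSge : ∀ t, 0 < t → ouVariance l t ≤ S t)
    (hSle : ∀ t, 0 < t → S t ≤ K * √t) :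
    exp (-2) / (8 * K * √l) ≤ (∫ t in (0)..δ, √(l / 2) * exp (-l * t) / √(S t)) ^ 2 := by
  have hSpos (t : ℝ) (ht : 0 < t) : 0 < S t := (ouVariance_pos hl ht).trans_le (hSge t ht)
  have hK : 0 < K := by simpa using (hSpos 1 one_pos).trans_le (hSle 1 one_pos)
  set L := exp (-1) * √(l / 2) / √(K / √l)
  set window := Set.Ioc (1 / (2 * l)) (1 / l)
  have hInt := integrableOn_integrand (δ := δ) hl hS hSge
  have hsub : window ⊆ Set.Ioc 0 δ :=
    Set.Ioc_subset_Ioc (by positivity) (by rwa [div_le_iff₀ hl, mul_comm])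
  have hlen : volume.real window = 1 / (2 * l) := by
    rw [Real.volume_real_Ioc, max_eq_left (by field_simp; linarith)]
    field_simp
    ring
  have hmono : L / (2 * l) ≤ ∫ t in (0)..δ, √(l / 2) * exp (-l * t) / √(S t) := by
    rw [intervalIntegral.integral_of_le (by nlinarith)]
    calc L / (2 * l) = L * volume.real window := by rw [hlen]; ring
      _ ≤ ∫ t in window, √(l / 2) * exp (-l * t) / √(S t) :=
        setIntegral_ge_of_const_le_real measurableSet_Ioc measure_Ioc_lt_top.ne
          (fun t ht => integrand_ge_of_mem_Ioc hl ht (hSpos t (lt_trans (by positivity) ht.1))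
            (hSle t (lt_trans (by positivity) ht.1)))
          (hInt.mono_set hsub)
      _ ≤ _ := setIntegral_mono_set hInt
        ((ae_restrict_iff' measurableSet_Ioc).mpr (.of_forall fun t _ => by positivity))
        hsub.eventuallyLE
  calc exp (-2) / (8 * K * √l) = (L / (2 * l)) ^ 2 := by
        rw [div_pow, div_pow, mul_pow, sq_sqrt (by positivity), sq_sqrt (by positivity),
          ← exp_nat_mul]
        field_simp
        rw [sq_sqrt hl.le]
        norm_num
        ring
    _ ≤ _ := pow_le_pow_left₀ (by positivity) hmono 2

theorem tendsto_sum_Icc_atTop_of_div_le {a : ℕ → ℕ → ℝ} {c : ℝ} (hc : 0 < c) (k₀ : ℕ)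
    (hnonneg : ∀ m, ∀ k ∈ Icc 1 m, 0 ≤ a m k)
    (hdiv : ∀ m, ∀ k ∈ Icc 1 m, k₀ ≤ k → c / k ≤ a m k) :
    Tendsto (fun m => ∑ k ∈ Icc 1 m, a m k) atTop atTop := by
  set h : ℕ → ℝ := fun k => if k₀ ≤ k then c / k else 0
  have hh : ∀ k, 0 ≤ h k := fun k => by dsimp only [h]; split_ifs <;> positivity
  have htail : Tendsto (fun n => ∑ k ∈ range n, h k) atTop atTop := by
    rw [← not_summable_iff_tendsto_nat_atTop_of_nonneg hh]
    intro hs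
    have hcn : Summable fun n : ℕ => c / n :=
      hs.congr_cofinite (by
        rw [Nat.cofinite_eq_atTop]
        filter_upwards [eventually_ge_atTop k₀] with k hk
        simp [h, hk])
    exact Real.not_summable_one_div_natCast
      (by simpa [div_div_cancel_left' hc.ne'] using hcn.div_const c)
  refine tendsto_atTop_mono (fun m => ?_) (htail.comp (tendsto_add_atTop_nat 1))
  rw [Function.comp_apply, Nat.range_succ_eq_Icc_zero, Icc_eq_cons_Ioc (Nat.zero_le m), sum_cons,
    ← Icc_add_one_left_eq_Ioc, zero_add]
  simp only [h, Nat.cast_zero, div_zero, ite_self, zero_add]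
  refine sum_le_sum fun k hk => ?_
  split_ifs with hk₀
  · exact hdiv m k hk hk₀
  · exact hnonneg m k hk

theorem stmt_9_general (lam : ℕ → ℝ)
    (c₀ C : ℝ) (hc₀ : 0 < c₀) (hC : 0 < C)
    (hlow : ∀ k : ℕ, 1 ≤ k → c₀ * (k : ℝ) ^ 2 ≤ lam k)
    (hup : ∀ k : ℕ, 1 ≤ k → lam k ≤ C * (k : ℝ) ^ 2)
    (δ : ℝ) (hδ : 0 < δ) :
    Tendsto (fun m : ℕ =>
      (2 / π) * ∑ k ∈ Finset.Icc 1 m,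
        (∫ t in (0:ℝ)..δ,
          (lam k * Real.exp (-lam k * t) / Real.sqrt (1 - Real.exp (-2 * lam k * t))) *
            (Real.sqrt ((1 - Real.exp (-2 * lam k * t)) / (2 * lam k)) /
              Real.sqrt (∑ j ∈ Finset.Icc 1 m,
                (1 - Real.exp (-2 * lam j * t)) / (2 * lam j)))) ^ 2)
      atTop atTop := by
  obtain ⟨k₀, hk₀⟩ := exists_nat_ge (1 / (c₀ * δ))
  set K := 3 * √(1 / (2 * c₀))
  refine .const_mul_atTop (by positivity) (tendsto_sum_Icc_atTop_of_div_le
    (c := exp (-2) / (8 * K * √C)) (by positivity) k₀ (fun _ _ _ => sq_nonneg _) ?_)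
  intro m k hk hk₀k
  have hk1 : 1 ≤ k := (mem_Icc.mp hk).1
  have hl := pos_of_mul_sq_le hc₀ hlow hk1
  have hlδ : 1 ≤ lam k * δ := by
    have : 1 / (c₀ * δ) ≤ k := hk₀.trans (by exact_mod_cast hk₀k)
    rw [div_le_iff₀ (by positivity)] at this
    nlinarith [hlow k hk1, (by exact_mod_cast hk1 : (1 : ℝ) ≤ k)]
  have hSge (t : ℝ) (ht : 0 < t) :
      ouVariance (lam k) t ≤ ∑ j ∈ Icc 1 m, ouVariance (lam j) t :=
    single_le_sum (fun j hj => (ouVariance_pos (pos_of_mul_sq_le hc₀ hlow (mem_Icc.mp hj).1)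
      ht).le) hk
  have hsqrt : √(lam k) ≤ √C * k := by
    rw [← sqrt_sq (Nat.cast_nonneg k), ← sqrt_mul hC.le]
    exact sqrt_le_sqrt (hup k hk1)
  calc exp (-2) / (8 * K * √C) / k = exp (-2) / (8 * K * (√C * k)) := by ring
    _ ≤ exp (-2) / (8 * K * √(lam k)) := by gcongr
    _ ≤ _ := sq_integral_integrand_ge hl hlδ (by unfold ouVariance; fun_prop) hSge
        fun t ht => sum_ouVariance_le hc₀ hlow m ht
    _ = _ := by
      congr 1
      refine intervalIntegral.integral_congr_ae (.of_forall fun t ht => ?_)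
      rw [Set.uIoc_of_le hδ.le] at ht
      exact (ouVariance_integrand_eq hl ht.1 _).symm

theorem stmt_9 (lam : ℕ → ℝ) (hpos : ∀ k : ℕ, 1 ≤ k → 0 < lam k)
    (c₀ C : ℝ) (hc₀ : 0 < c₀) (hC : 0 < C)
    (hlow : ∀ k : ℕ, 1 ≤ k → c₀ * (k : ℝ) ^ 2 ≤ lam k)
    (hup : ∀ k : ℕ, 1 ≤ k → lam k ≤ C * (k : ℝ) ^ 2)
    (δ : ℝ) (hδ : 0 < δ) :
    Tendsto (fun m : ℕ =>
      (2 / π) * ∑ k ∈ Finset.Icc 1 m,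
        (∫ t in (0:ℝ)..δ,
          (lam k * Real.exp (-lam k * t) / Real.sqrt (1 - Real.exp (-2 * lam k * t))) *
            (Real.sqrt ((1 - Real.exp (-2 * lam k * t)) / (2 * lam k)) /
              Real.sqrt (∑ j ∈ Finset.Icc 1 m,
                (1 - Real.exp (-2 * lam j * t)) / (2 * lam j)))) ^ 2)
      atTop atTop :=
  stmt_9_general lam c₀ C hc₀ hC hlow hup δ hδ
end

section
/- Let (λ_k) satisfy c₀ k² ≤ λ_k for all k ≥ 1 (c₀ > 0) and fix δ > 0. Then there exists a constant K > 0 (depending only on c₀ and δ) such that for every m ≥ 2, (2/π) ∑_{k=1}^m (∫_0^δ (√λ_k e^{-λ_k t}/√2) · |c(t)|^{-1} dt)² ≥ K ∑_{k=1}^m λ_k^{-1/2}, where |c(t)| = (∑_{j=1}^m (1-e^{-2λ_j t})/(2λ_j))^{1/2}. -/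
/-!
Write `S(t) = ∑ⱼ (1 - e^{-2λⱼt}) / (2λⱼ)` for the squared norm `|c(t)|²`. Each summand is at most
`min(t, 1/(2c₀j²))`, and splitting the sum at `j ≈ (2c₀t)^{-1/2}` gives `S(t) ≤ A √t` with
`A = 3 / √(2c₀)`. So the `k`-th integrand dominates `√(λₖ / (2A)) t^{-1/4} e^{-λₖt}`, and the
substitution `s = λₖt` with `λₖ ≥ c₀` bounds its integral below by `λₖ^{-3/4} B`, where
`B = ∫₀^{c₀δ} s^{-1/4} e^{-s} ds`. Squaring gives `B² / (2A) · λₖ^{-1/2}` per term, so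
`K = B² / (πA)`.
The lower bound `S(t) ≥ e^{-2λ₁δ} t` is needed only because a non-integrable integrand would have
integral `0`.
-/

open MeasureTheory Real

lemma sum_Icc_min_inv_sq_le {s : ℝ} (hs : 0 < s) (m : ℕ) :
    ∑ j ∈ Finset.Icc 1 m, min s ((j : ℝ) ^ 2)⁻¹ ≤ 3 * √s := by
  set N := ⌊(√s)⁻¹⌋₊
  have hsqrt : 0 < √s := sqrt_pos.mpr hs
  have hN : (N : ℝ) ≤ (√s)⁻¹ := Nat.floor_le (by positivity)
  have hN' : (√s)⁻¹ < N + 1 := Nat.lt_floor_add_one _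
  have hsub : Finset.Icc 1 m ⊆ Finset.Icc 1 N ∪ Finset.Ioo N (m + 1) := by
    intro j; simp only [Finset.mem_union, Finset.mem_Icc, Finset.mem_Ioo]; omega
  have hdisj : Disjoint (Finset.Icc 1 N) (Finset.Ioo N (m + 1)) := by
    rw [Finset.disjoint_left]; intro j; simp only [Finset.mem_Icc, Finset.mem_Ioo]; omega
  calc ∑ j ∈ Finset.Icc 1 m, min s ((j : ℝ) ^ 2)⁻¹
      ≤ ∑ j ∈ Finset.Icc 1 N ∪ Finset.Ioo N (m + 1), min s ((j : ℝ) ^ 2)⁻¹ :=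
        Finset.sum_le_sum_of_subset_of_nonneg hsub fun _ _ _ => le_min hs.le (by positivity)
    _ = ∑ j ∈ Finset.Icc 1 N, min s ((j : ℝ) ^ 2)⁻¹
          + ∑ j ∈ Finset.Ioo N (m + 1), min s ((j : ℝ) ^ 2)⁻¹ := Finset.sum_union hdisj
    _ ≤ ∑ j ∈ Finset.Icc 1 N, s + ∑ j ∈ Finset.Ioo N (m + 1), ((j : ℝ) ^ 2)⁻¹ :=
        add_le_add (Finset.sum_le_sum fun _ _ => min_le_left _ _)
          (Finset.sum_le_sum fun _ _ => min_le_right _ _)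
    _ ≤ N * s + 2 / (N + 1) := by
        rw [Finset.sum_const, Nat.card_Icc, nsmul_eq_mul, Nat.add_sub_cancel]
        exact add_le_add_right (sum_Ioo_inv_sq_le N (m + 1)) _
    _ ≤ (√s)⁻¹ * s + 2 * √s := by
        gcongr
        rw [div_le_iff₀ (by positivity)]
        have := mul_lt_mul_of_pos_left hN' hsqrt
        rw [mul_inv_cancel₀ hsqrt.ne'] at this
        linarith
    _ = 3 * √s := by
        rw [inv_mul_eq_div, div_sqrt]
        ring

lemma one_sub_exp_div_le_min {l : ℝ} (hl : 0 < l) (t : ℝ) :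
    (1 - exp (-2 * l * t)) / (2 * l) ≤ min t (2 * l)⁻¹ := by
  refine le_min ?_ ?_
  · rw [div_le_iff₀ (by positivity)]
    linarith [add_one_le_exp (-2 * l * t)]
  · rw [div_eq_mul_inv]
    exact mul_le_of_le_one_left (by positivity) (by linarith [exp_pos (-2 * l * t)])

lemma mul_exp_le_one_sub_exp_div {l : ℝ} (hl : 0 < l) (t : ℝ) :
    t * exp (-2 * l * t) ≤ (1 - exp (-2 * l * t)) / (2 * l) := by
  rw [le_div_iff₀ (by positivity)]
  have hinv : exp (2 * l * t) * exp (-2 * l * t) = 1 := by rw [← exp_add]; ring_nf; exact exp_zero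
  nlinarith [add_one_le_exp (2 * l * t), exp_pos (-2 * l * t)]

lemma sum_one_sub_exp_div_le {lam : ℕ → ℝ} (hpos : ∀ k : ℕ, 1 ≤ k → 0 < lam k) {c₀ : ℝ}
    (hc₀ : 0 < c₀) (hlow : ∀ k : ℕ, 1 ≤ k → c₀ * (k : ℝ) ^ 2 ≤ lam k) (m : ℕ) {t : ℝ} (ht : 0 < t) :
    ∑ j ∈ Finset.Icc 1 m, (1 - exp (-2 * lam j * t)) / (2 * lam j) ≤ 3 / √(2 * c₀) * √t := by
  have hterm : ∀ j ∈ Finset.Icc 1 m, (1 - exp (-2 * lam j * t)) / (2 * lam j)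
      ≤ (2 * c₀)⁻¹ * min (2 * c₀ * t) ((j : ℝ) ^ 2)⁻¹ := by
    intro j hj
    have hj := (Finset.mem_Icc.mp hj).1
    rw [mul_min_of_nonneg _ _ (by positivity), inv_mul_cancel_left₀ (by positivity), ← mul_inv]
    have : (0 : ℝ) < j := by exact_mod_cast hj
    exact (one_sub_exp_div_le_min (hpos j hj) t).trans
      (min_le_min_left _ (inv_anti₀ (by positivity) (by linarith [hlow j hj])))
  calc _ ≤ ∑ j ∈ Finset.Icc 1 m, (2 * c₀)⁻¹ * min (2 * c₀ * t) ((j : ℝ) ^ 2)⁻¹ :=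
        Finset.sum_le_sum hterm
    _ ≤ (2 * c₀)⁻¹ * (3 * √(2 * c₀ * t)) := by
        rw [← Finset.mul_sum]
        gcongr
        exact sum_Icc_min_inv_sq_le (by positivity) m
    _ = 3 / √(2 * c₀) * √t := by
        rw [sqrt_mul (by positivity)]
        have h2c : 0 < √(2 * c₀) := sqrt_pos.mpr (by positivity)
        have hsq : 2 * c₀ = √(2 * c₀) * √(2 * c₀) := (mul_self_sqrt (by positivity)).symm
        set a := √(2 * c₀)
        rw [hsq]
        field_simp

lemma mul_exp_le_sum_one_sub_exp_div {lam : ℕ → ℝ} (hpos : ∀ k : ℕ, 1 ≤ k → 0 < lam k)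
    {m : ℕ} (hm : 1 ≤ m) {t δ : ℝ} (ht : 0 ≤ t) (htδ : t ≤ δ) :
    exp (-2 * lam 1 * δ) * t ≤ ∑ j ∈ Finset.Icc 1 m, (1 - exp (-2 * lam j * t)) / (2 * lam j) := by
  have hterm_nonneg : ∀ j ∈ Finset.Icc 1 m, 0 ≤ (1 - exp (-2 * lam j * t)) / (2 * lam j) :=
    fun j hj => (mul_nonneg ht (exp_pos _).le).trans
      (mul_exp_le_one_sub_exp_div (hpos j (Finset.mem_Icc.mp hj).1) t)
  have hl1 := hpos 1 le_rfl
  calc exp (-2 * lam 1 * δ) * t ≤ t * exp (-2 * lam 1 * t) := by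
        rw [mul_comm]; exact mul_le_mul_of_nonneg_left (exp_le_exp.mpr (by nlinarith)) ht
    _ ≤ (1 - exp (-2 * lam 1 * t)) / (2 * lam 1) := mul_exp_le_one_sub_exp_div hl1 t
    _ ≤ _ := Finset.single_le_sum hterm_nonneg (Finset.mem_Icc.mpr ⟨le_rfl, hm⟩)

open intervalIntegral in
lemma rpow_neg_mul_integral_le_integral_rpow_mul_exp {p c L δ : ℝ} (hp : -1 < p) (hc : 0 < c)
    (hcL : c ≤ L) (hδ : 0 ≤ δ) :
    L ^ (-(p + 1)) * ∫ s in (0 : ℝ)..c * δ, s ^ p * exp (-s)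
      ≤ ∫ t in (0 : ℝ)..δ, t ^ p * exp (-L * t) := by
  have hL : 0 < L := hc.trans_le hcL
  have hscale : ∀ t ∈ Set.uIcc 0 δ,
      t ^ p * exp (-L * t) = L ^ (-p) * ((L * t) ^ p * exp (-(L * t))) := by
    intro t ht
    rw [Set.uIcc_of_le hδ] at ht
    rw [mul_rpow hL.le ht.1, rpow_neg hL.le, neg_mul, ← mul_assoc, ← mul_assoc,
      inv_mul_cancel₀ (rpow_pos_of_pos hL p).ne', one_mul]
  rw [integral_congr hscale, intervalIntegral.integral_const_mul,
    integral_comp_mul_left (fun s => s ^ p * exp (-s)) hL.ne', mul_zero, smul_eq_mul, ← mul_assoc,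
    ← rpow_neg_one, ← rpow_add hL, ← neg_add]
  refine mul_le_mul_of_nonneg_left ?_ (by positivity)
  refine integral_mono_interval le_rfl (by positivity) (by nlinarith) ?_
    ((intervalIntegrable_rpow' hp).mul_continuousOn (by fun_prop))
  filter_upwards [ae_restrict_mem measurableSet_Ioc] with s hs
  have := hs.1
  positivity

lemma integral_rpow_mul_exp_neg_pos {p b : ℝ} (hp : -1 < p) (hb : 0 < b) :
    0 < ∫ s in (0 : ℝ)..b, s ^ p * exp (-s) :=
  intervalIntegral.intervalIntegral_pos_of_pos_on
    ((intervalIntegral.intervalIntegrable_rpow' hp).mul_continuousOn (by fun_prop))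
    (fun s hs => by have := hs.1; positivity) hb

section
variable {S : ℝ → ℝ} {a L δ : ℝ}

lemma intervalIntegrable_exp_div_sqrt (hS : Measurable S) (ha : 0 < a) (hL : 0 ≤ L) (hδ : 0 ≤ δ)
    (hlow : ∀ t ∈ Set.Ioc 0 δ, a * t ≤ S t) :
    IntervalIntegrable (fun t => exp (-L * t) / √(S t)) volume 0 δ := by
  have hmajorant := (intervalIntegral.intervalIntegrable_rpow' (a := 0) (b := δ)
    (r := -(1 / 2)) (by norm_num)).const_mul (√a)⁻¹
  rw [intervalIntegrable_iff_integrableOn_Ioc_of_le hδ] at hmajorant ⊢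
  have hmeas : Measurable fun t => exp (-L * t) / √(S t) :=
    (by fun_prop : Measurable fun t => exp (-L * t)).div hS.sqrt
  refine hmajorant.mono' hmeas.aestronglyMeasurable ?_
  filter_upwards [ae_restrict_mem measurableSet_Ioc] with t ht
  have hSt : 0 < a * t := mul_pos ha ht.1
  rw [norm_div, norm_of_nonneg (exp_pos _).le, norm_of_nonneg (sqrt_nonneg _), rpow_neg ht.1.le,
    ← sqrt_eq_rpow, ← mul_inv, ← sqrt_mul ha.le, ← one_div]
  exact div_le_div₀ zero_le_one (exp_le_one_iff.mpr (by nlinarith [ht.1]))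
    (sqrt_pos.mpr hSt) (sqrt_le_sqrt (hlow t ht))

lemma rpow_mul_integral_div_sqrt_le_integral_exp_div_sqrt (hS : Measurable S) {A c : ℝ}
    (ha : 0 < a) (hA : 0 < A) (hc : 0 < c) (hcL : c ≤ L) (hδ : 0 < δ)
    (hlow : ∀ t ∈ Set.Ioc 0 δ, a * t ≤ S t) (hup : ∀ t ∈ Set.Ioc 0 δ, S t ≤ A * √t) :
    L ^ (-(3 / 4) : ℝ) * (∫ s in (0 : ℝ)..c * δ, s ^ (-(1 / 4) : ℝ) * exp (-s)) / √A
      ≤ ∫ t in (0 : ℝ)..δ, exp (-L * t) / √(S t) := by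
  have hL : 0 < L := hc.trans_le hcL
  have hsubst := rpow_neg_mul_integral_le_integral_rpow_mul_exp (p := -(1 / 4)) (by norm_num) hc hcL
    hδ.le
  norm_num only at hsubst
  calc _ ≤ (∫ t in (0 : ℝ)..δ, t ^ (-(1 / 4) : ℝ) * exp (-L * t)) / √A := by gcongr
    _ = ∫ t in (0 : ℝ)..δ, t ^ (-(1 / 4) : ℝ) * exp (-L * t) / √A :=
        (intervalIntegral.integral_div _ _).symm
    _ ≤ _ := by
        refine intervalIntegral.integral_mono_on_of_le_Ioo hδ.le
          (((intervalIntegral.intervalIntegrable_rpow' (by norm_num)).mul_continuousOn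
            (by fun_prop)).div_const _)
          (intervalIntegrable_exp_div_sqrt hS ha hL.le hδ.le hlow) fun t ht => ?_
        have ht' : t ∈ Set.Ioc 0 δ := Set.Ioo_subset_Ioc_self ht
        have hquarter : √(A * √t) = √A * t ^ (1 / 4 : ℝ) := by
          rw [sqrt_mul hA.le, sqrt_eq_rpow t, sqrt_eq_rpow (t ^ _), ← rpow_mul ht.1.le]
          norm_num
        rw [rpow_neg ht.1.le, inv_mul_eq_div, div_div, mul_comm _ √A, ← hquarter]
        exact div_le_div_of_nonneg_left (exp_pos _).le
          (sqrt_pos.mpr (lt_of_lt_of_le (mul_pos ha ht.1) (hlow t ht'))) (sqrt_le_sqrt (hup t ht'))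

lemma mul_inv_sqrt_le_sq_integral (hS : Measurable S) {A c : ℝ}
    (ha : 0 < a) (hA : 0 < A) (hc : 0 < c) (hcL : c ≤ L) (hδ : 0 < δ)
    (hlow : ∀ t ∈ Set.Ioc 0 δ, a * t ≤ S t) (hup : ∀ t ∈ Set.Ioc 0 δ, S t ≤ A * √t) :
    (∫ s in (0 : ℝ)..c * δ, s ^ (-(1 / 4) : ℝ) * exp (-s)) ^ 2 / (2 * A) * (1 / √L)
      ≤ (∫ t in (0 : ℝ)..δ, (√L * exp (-L * t) / √2) / √(S t)) ^ 2 := by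
  set B := ∫ s in (0 : ℝ)..c * δ, s ^ (-(1 / 4) : ℝ) * exp (-s)
  have hL : 0 < L := hc.trans_le hcL
  have hB : 0 < B := integral_rpow_mul_exp_neg_pos (by norm_num) (mul_pos hc hδ)
  have hpull : ∫ t in (0 : ℝ)..δ, (√L * exp (-L * t) / √2) / √(S t)
      = √L / √2 * ∫ t in (0 : ℝ)..δ, exp (-L * t) / √(S t) := by
    rw [← intervalIntegral.integral_const_mul]
    congr 1 with t
    ring
  have hquarter : (√L * L ^ (-(3 / 4) : ℝ)) ^ 2 = 1 / √L := by
    rw [mul_pow, sq_sqrt hL.le, ← rpow_natCast, ← rpow_mul hL.le, sqrt_eq_rpow, one_div,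
      ← rpow_neg hL.le]
    nth_rw 1 [← rpow_one L]
    rw [← rpow_add hL]
    norm_num
  calc B ^ 2 / (2 * A) * (1 / √L) = (√L / √2 * (L ^ (-(3 / 4) : ℝ) * B / √A)) ^ 2 := by
        rw [← hquarter]
        simp only [mul_pow, div_pow, sq_sqrt zero_le_two, sq_sqrt hA.le]
        ring
    _ ≤ (√L / √2 * ∫ t in (0 : ℝ)..δ, exp (-L * t) / √(S t)) ^ 2 := by
        gcongr
        exact rpow_mul_integral_div_sqrt_le_integral_exp_div_sqrt hS ha hA hc hcL hδ hlow hup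
    _ = _ := by rw [hpull]

end

theorem stmt_10 (lam : ℕ → ℝ) (hpos : ∀ k : ℕ, 1 ≤ k → 0 < lam k)
    (c₀ : ℝ) (hc₀ : 0 < c₀)
    (hlow : ∀ k : ℕ, 1 ≤ k → c₀ * (k : ℝ) ^ 2 ≤ lam k)
    (δ : ℝ) (hδ : 0 < δ) :
    ∃ K : ℝ, 0 < K ∧ ∀ m : ℕ, 2 ≤ m →
      K * ∑ k ∈ Finset.Icc 1 m, 1 / Real.sqrt (lam k)
        ≤ (2 / π) * ∑ k ∈ Finset.Icc 1 m,
            (∫ t in (0:ℝ)..δ,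
              (Real.sqrt (lam k) * Real.exp (-lam k * t) / Real.sqrt 2) /
                Real.sqrt (∑ j ∈ Finset.Icc 1 m,
                  (1 - Real.exp (-2 * lam j * t)) / (2 * lam j))) ^ 2 := by
  set B := ∫ s in (0 : ℝ)..c₀ * δ, s ^ (-(1 / 4) : ℝ) * exp (-s)
  set A := 3 / √(2 * c₀)
  have hB : 0 < B := integral_rpow_mul_exp_neg_pos (by norm_num) (mul_pos hc₀ hδ)
  have hA : 0 < A := by positivity
  refine ⟨B ^ 2 / (π * A), by positivity, fun m hm => ?_⟩
  have hS : Measurable fun t => ∑ j ∈ Finset.Icc 1 m, (1 - exp (-2 * lam j * t)) / (2 * lam j) := by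
    fun_prop
  have hterm : ∀ k ∈ Finset.Icc 1 m, B ^ 2 / (2 * A) * (1 / √(lam k))
      ≤ (∫ t in (0 : ℝ)..δ, (√(lam k) * exp (-lam k * t) / √2) /
          √(∑ j ∈ Finset.Icc 1 m, (1 - exp (-2 * lam j * t)) / (2 * lam j))) ^ 2 := by
    intro k hk
    have hk1 : (1 : ℝ) ≤ k := by exact_mod_cast (Finset.mem_Icc.mp hk).1
    exact mul_inv_sqrt_le_sq_integral hS (exp_pos _) hA hc₀
      ((le_mul_of_one_le_right hc₀.le (one_le_pow₀ hk1)).trans (hlow k (by exact_mod_cast hk1))) hδ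
      (fun t ht => mul_exp_le_sum_one_sub_exp_div hpos (by omega) ht.1.le ht.2)
      (fun t ht => sum_one_sub_exp_div_le hpos hc₀ hlow m ht.1)
  calc B ^ 2 / (π * A) * ∑ k ∈ Finset.Icc 1 m, 1 / √(lam k)
      = 2 / π * ∑ k ∈ Finset.Icc 1 m, B ^ 2 / (2 * A) * (1 / √(lam k)) := by
        rw [← Finset.mul_sum, ← mul_assoc]
        congr 1
        field_simp
    _ ≤ _ := by gcongr with k hk; exact hterm k hk
end
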